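/- arXiv:2203.07469 — 2 statements merged into one kernel-verified Lean document; each statement's English description precedes it below -/
import Mathlib

section
/- Let v_1 > v_2 > ⋯ > v_k > 0, let x_1,…,x_k be orthonormal vectors in ℂⁿ (k ≤ n), and let ρ ∈ Dens(n). Then Σ_{i=1}^k v_i (x_i* ρ x_i) ≤ Σ_{i=1}^k v_i λ_i(ρ), with equality if and only if x_1,…,x_k are eigenvectors of ρ with ρ x_i = λ_i(ρ) x_i for i = 1,…,k. Consequently the quantum score with report set the tuples of k orthonormal vectors, measurement μ(x_1,…,x_k) = {x_1x_1*,…,x_kx_k*, I − Σ_i x_ix_i*} and payment v_y for outcome y ≤ k (and 0 otherwise) elicits the set of tuples of orthonormal eigenvectors corresponding to the top k eigenvalues of ρ. -/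
/-!
Expand each `x i` in an orthonormal eigenbasis `u` of `ρ` ordered by decreasing eigenvalue `λ`:
`x i* ρ x i = ∑ m, λ m * p i m` with `p i m = ‖⟪u m, x i⟫‖²`, a matrix whose rows sum to `1`
(Parseval) and whose columns sum to at most `1` (Bessel). The first `j + 1` rows of `p` therefore
put weights in `[0, 1]` of total mass `j + 1` on the eigenvalues, so by the bathtub principle the
partial sums of the `x i* ρ x i` are bounded by those of the `λ i`. Summation by parts against the
positive increments of `v` gives the weighted bound. In the equality case all partial sums agree,
which forces `p i m = 0` unless `λ m = λ i`, i.e. `ρ x i = λ i x i`; and the top `k` eigenvectors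
attain the bound.
-/

open Matrix BigOperators ComplexOrder

noncomputable section

/-- The space of `n × n` complex matrices. -/
abbrev Mat (n : ℕ) := Matrix (Fin n) (Fin n) ℂ

/-- The set of density matrices on ℂⁿ: positive semidefinite with trace 1. -/
def Dens (n : ℕ) : Set (Mat n) := {ρ | ρ.PosSemidef ∧ ρ.trace = 1}

/-- Real inner product on (Hermitian) matrices: ⟨A,B⟩ = Tr(AB) (real part). -/
def hip {n : ℕ} (A B : Mat n) : ℝ := ((A * B).trace).re

/-- A POVM with finite outcome set `Y`. -/
def IsPOVM {n : ℕ} {Y : Type*} [Fintype Y] (μ : Y → Mat n) : Prop :=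
  (∀ y, (μ y).PosSemidef) ∧ ∑ y, μ y = 1

/-- A projection-valued measurement. -/
def IsPVM {n : ℕ} {Y : Type*} [Fintype Y] (μ : Y → Mat n) : Prop :=
  IsPOVM μ ∧ (∀ y, (μ y).IsHermitian ∧ μ y * μ y = μ y) ∧
    ∀ y y', y ≠ y' → μ y * μ y' = 0

/-- Expected score of a quantum score with report type `R`. -/
def expScoreR {n : ℕ} {R : Type*} {Y : Type*} [Fintype Y]
    (s : R → Y → ℝ) (μ : R → Y → Mat n) (r : R) (ρ : Mat n) : ℝ :=
  ∑ y, hip (μ r y) ρ * s r y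

/-- Truthfulness of a quantum score. -/
def Truthful {n : ℕ} {Y : Type*} [Fintype Y]
    (s : Mat n → Y → ℝ) (μ : Mat n → Y → Mat n) : Prop :=
  ∀ ρ ∈ Dens n, ∀ ρ' ∈ Dens n, expScoreR s μ ρ' ρ ≤ expScoreR s μ ρ ρ

/-- Strict truthfulness of a quantum score. -/
def StrictlyTruthful {n : ℕ} {Y : Type*} [Fintype Y]
    (s : Mat n → Y → ℝ) (μ : Mat n → Y → Mat n) : Prop :=
  Truthful s μ ∧ ∀ ρ ∈ Dens n, ∀ ρ' ∈ Dens n,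
    expScoreR s μ ρ' ρ = expScoreR s μ ρ ρ → ρ' = ρ

/-- `d` is a (Hermitian-matrix) subgradient of `F` at `ρ` relative to `Dens n`. -/
def IsQSubgrad {n : ℕ} (F : Mat n → ℝ) (ρ d : Mat n) : Prop :=
  ∀ τ ∈ Dens n, F ρ + hip d (τ - ρ) ≤ F τ

/-- `d` is a subgradient of `f` at `p` relative to `P ⊆ ℝ^Y`. -/
def IsCSubgrad {Y : Type*} [Fintype Y] (P : Set (Y → ℝ)) (f : (Y → ℝ) → ℝ)
    (p d : Y → ℝ) : Prop :=
  ∀ q ∈ P, f p + ∑ y, d y * (q y - p y) ≤ f q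

/-- A POVM is tomographically complete if the real span of its elements is
the set of Hermitian matrices. -/
def TomoComplete {n : ℕ} {Y : Type*} [Fintype Y] (μ : Y → Mat n) : Prop :=
  ∀ X : Mat n, X.IsHermitian ↔ X ∈ Submodule.span ℝ (Set.range μ)

/-- The eigenvalues of a Hermitian matrix, in non-increasing order
(junk value `0` on non-Hermitian matrices). -/
def eigs {n : ℕ} (ρ : Mat n) : Fin n → ℝ :=
  if h : ρ.IsHermitian then
    fun i => (h.eigenvalues ∘ (Tuple.sort h.eigenvalues)) i.rev
  else 0

/-- The outer product `v v*`. -/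
def outer {n : ℕ} (v : Fin n → ℂ) : Mat n := Matrix.vecMulVec v (star v)

/-- A family of orthonormal vectors in ℂⁿ. -/
def ONFam {n k : ℕ} (x : Fin k → Fin n → ℂ) : Prop :=
  ∀ i j, ∑ m, (starRingEnd ℂ) (x i m) * x j m = if i = j then 1 else 0

/-- `x` is a spectral decomposition of `ρ` (with eigenvalues in non-increasing
order `eigs ρ`). -/
def IsSpecDecomp {n : ℕ} (ρ : Mat n) (x : Fin n → Fin n → ℂ) : Prop :=
  ONFam x ∧ ρ = ∑ y, (eigs ρ y : ℂ) • outer (x y)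

/-- Expected classical score `ŝ(q; p)`. -/
def cExp {n : ℕ} (s : (Fin n → ℝ) → Fin n → ℝ) (q p : Fin n → ℝ) : ℝ :=
  ∑ y, p y * s q y

/-- Properness of a classical scoring rule. -/
def Proper {n : ℕ} (s : (Fin n → ℝ) → Fin n → ℝ) : Prop :=
  ∀ p ∈ stdSimplex ℝ (Fin n), ∀ q ∈ stdSimplex ℝ (Fin n), cExp s q p ≤ cExp s p p

/-- Strict properness of a classical scoring rule. -/
def StrictlyProper {n : ℕ} (s : (Fin n → ℝ) → Fin n → ℝ) : Prop :=
  Proper s ∧ ∀ p ∈ stdSimplex ℝ (Fin n), ∀ q ∈ stdSimplex ℝ (Fin n),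
    cExp s q p = cExp s p p → q = p

/-- Permutation invariance of a classical scoring rule: `ŝ(p, y) = ŝ(πp, π y)`
where `(πp)_y = p_{π y}`. -/
def PermInv {n : ℕ} (s : (Fin n → ℝ) → Fin n → ℝ) : Prop :=
  ∀ (π : Equiv.Perm (Fin n)) (p : Fin n → ℝ) (y : Fin n), s p y = s (p ∘ π) (π y)

/-- Expected spectral score `S[ŝ](ρ'; ρ)` computed using the spectral
decomposition `x` of the report `ρ'`. -/
def specExp {n : ℕ} (s : (Fin n → ℝ) → Fin n → ℝ) (x : Fin n → Fin n → ℂ)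
    (ρ' ρ : Mat n) : ℝ :=
  ∑ y, hip (outer (x y)) ρ * s (eigs ρ') y

/-- Truthfulness of the spectral score `S[ŝ]`. -/
def SpecTruthful {n : ℕ} (s : (Fin n → ℝ) → Fin n → ℝ) : Prop :=
  ∀ ρ ∈ Dens n, ∀ ρ' ∈ Dens n, ∀ x z, IsSpecDecomp ρ' x → IsSpecDecomp ρ z →
    specExp s x ρ' ρ ≤ specExp s z ρ ρ

/-- Strict truthfulness of the spectral score `S[ŝ]`. -/
def SpecStrictlyTruthful {n : ℕ} (s : (Fin n → ℝ) → Fin n → ℝ) : Prop :=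
  SpecTruthful s ∧ ∀ ρ ∈ Dens n, ∀ ρ' ∈ Dens n, ∀ x z,
    IsSpecDecomp ρ' x → IsSpecDecomp ρ z →
    specExp s x ρ' ρ = specExp s z ρ ρ → ρ' = ρ

/-- Elicitability of a property of density matrices by a quantum score. -/
def ElicitableProp {n : ℕ} {R : Type*} (Γ : Mat n → R) : Prop :=
  ∃ (m : ℕ) (s : R → Fin m → ℝ) (μ : R → Fin m → Mat n),
    (∀ r, IsPOVM (μ r)) ∧
    ∀ ρ ∈ Dens n, ∀ r, (∀ r', expScoreR s μ r' ρ ≤ expScoreR s μ r ρ) ↔ r = Γ ρ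

/-- Identifiability of an ℝᵏ-valued property of density matrices. -/
def IdentifiableProp {n k : ℕ} (Γ : Mat n → (Fin k → ℝ)) : Prop :=
  ∃ V : (Fin k → ℝ) → Fin k → Mat n,
    ∀ r ∈ Γ '' (Dens n), (∀ i, (V r i).IsHermitian) ∧
      ∀ ρ ∈ Dens n, (Γ ρ = r ↔ ∀ i, hip (V r i) ρ = 0)

/-- `Γ` is `k`-elicitable. -/
def KElicitable {n : ℕ} {R : Type*} (k : ℕ) (Γ : Mat n → R) : Prop :=
  ∃ (Γh : Mat n → (Fin k → ℝ)) (ψ : (Fin k → ℝ) → R),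
    ElicitableProp Γh ∧ IdentifiableProp Γh ∧ ∀ ρ ∈ Dens n, Γ ρ = ψ (Γh ρ)

end

open Finset

theorem Fin.sum_mul_eq_sum_castSucc_sub_last {k : ℕ} (v e : Fin (k + 1) → ℝ) :
    ∑ i, v i * e i =
      ∑ i : Fin k, (v i.castSucc - v (last k)) * e i.castSucc + v (last k) * ∑ i, e i := by
  simp only [Fin.sum_univ_castSucc, sub_mul, sum_sub_distrib, mul_add, mul_sum]
  ring

theorem Fin.sum_mul_nonneg_of_sum_Iic_nonneg {k : ℕ} {v e : Fin k → ℝ} (hv : Antitone v)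
    (hv0 : ∀ i, 0 ≤ v i) (he : ∀ j, 0 ≤ ∑ i ∈ Iic j, e i) : 0 ≤ ∑ i, v i * e i := by
  induction k with
  | zero => simp
  | succ k ih =>
    rw [Fin.sum_mul_eq_sum_castSucc_sub_last]
    refine add_nonneg (ih (fun i j hij => ?_) (fun i => ?_) (fun j => ?_)) ?_
    · simpa using hv (Fin.castSucc_le_castSucc_iff.mpr hij)
    · exact sub_nonneg.mpr (hv (Fin.le_last _))
    · simpa only [← Fin.sum_Iic_castSucc] using he j.castSucc
    · simpa only [← Fin.top_eq_last, Iic_top] using mul_nonneg (hv0 ⊤) (he ⊤)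

theorem Fin.eq_zero_of_sum_mul_eq_zero {k : ℕ} {v e : Fin k → ℝ} (hv : StrictAnti v)
    (hv0 : ∀ i, 0 < v i) (he : ∀ j, 0 ≤ ∑ i ∈ Iic j, e i) (h : ∑ i, v i * e i = 0) :
    e = 0 := by
  induction k with
  | zero => exact funext (fun i => i.elim0)
  | succ k ih =>
    have hv' : StrictAnti fun i : Fin k => v i.castSucc - v (last k) := fun i j hij => by
      simpa using hv (Fin.castSucc_lt_castSucc_iff.mpr hij)
    have he' (j : Fin k) : 0 ≤ ∑ i ∈ Iic j, e i.castSucc := by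
      simpa only [← Fin.sum_Iic_castSucc] using he j.castSucc
    have htotal : 0 ≤ ∑ i, e i := by
      simpa only [← Fin.top_eq_last, Iic_top] using he ⊤
    rw [Fin.sum_mul_eq_sum_castSucc_sub_last] at h
    have hinit := Fin.sum_mul_nonneg_of_sum_Iic_nonneg hv'.antitone
      (fun i => (sub_pos.mpr (hv (Fin.castSucc_lt_last i))).le) he'
    have hlast := mul_nonneg (hv0 (last k)).le htotal
    have hcast : (fun i : Fin k => e i.castSucc) = 0 :=
      ih hv' (fun i => sub_pos.mpr (hv (Fin.castSucc_lt_last i))) he' (by linarith)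
    have hsum : ∑ i, e i = 0 :=
      (mul_eq_zero.mp (by linarith : v (last k) * ∑ i, e i = 0)).resolve_left (hv0 _).ne'
    funext i
    refine Fin.lastCases ?_ (fun i => congrFun hcast i) i
    simpa [Fin.sum_univ_castSucc, congrFun hcast] using hsum

section Bathtub

variable {n : ℕ} {μ t : Fin n → ℝ} {a : Fin n}

theorem sum_Iic_sub_sum_mul_eq (ht : ∑ m, t m = #(Iic a)) :
    ∑ m ≤ a, μ m - ∑ m, μ m * t m =
      ∑ m, (μ m - μ a) * ((if m ≤ a then 1 else 0) - t m) := by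
  simp only [mul_sub, mul_ite, mul_one, mul_zero, sum_sub_distrib, ← sum_filter, filter_ge_eq_Iic,
    sub_mul, ← mul_sum, ht, sum_const, nsmul_eq_mul]
  ring

theorem sub_mul_ite_sub_nonneg (hμ : Antitone μ) {m : Fin n} (ht0 : 0 ≤ t m) (ht1 : t m ≤ 1) :
    0 ≤ (μ m - μ a) * ((if m ≤ a then 1 else 0) - t m) := by
  split_ifs with hma
  · exact mul_nonneg (sub_nonneg.mpr (hμ hma)) (sub_nonneg.mpr ht1)
  · exact mul_nonneg_of_nonpos_of_nonpos (sub_nonpos.mpr (hμ (not_le.mp hma).le)) (by linarith)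

theorem sum_mul_le_sum_Iic (hμ : Antitone μ) (ht0 : ∀ m, 0 ≤ t m) (ht1 : ∀ m, t m ≤ 1)
    (ht : ∑ m, t m = #(Iic a)) : ∑ m, μ m * t m ≤ ∑ m ≤ a, μ m := by
  have := sum_nonneg fun m (_ : m ∈ univ) => sub_mul_ite_sub_nonneg (a := a) hμ (ht0 m) (ht1 m)
  linarith [sum_Iic_sub_sum_mul_eq (μ := μ) ht]

theorem eq_zero_of_sum_mul_eq_sum_Iic (hμ : Antitone μ) (ht0 : ∀ m, 0 ≤ t m)
    (ht1 : ∀ m, t m ≤ 1) (ht : ∑ m, t m = #(Iic a)) (h : ∑ m, μ m * t m = ∑ m ≤ a, μ m)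
    {m : Fin n} (hm : μ m < μ a) : t m = 0 := by
  have hslack := (sum_eq_zero_iff_of_nonneg fun m _ =>
    sub_mul_ite_sub_nonneg (a := a) hμ (ht0 m) (ht1 m)).mp
      (by rw [← sum_Iic_sub_sum_mul_eq ht, h, sub_self]) m (mem_univ m)
  rw [if_neg fun hma => (hμ hma).not_gt hm, zero_sub, mul_neg, neg_eq_zero] at hslack
  exact (mul_eq_zero.mp hslack).resolve_left (sub_ne_zero.mpr hm.ne)

end Bathtub

section Substochastic

variable {k n : ℕ} {μ : Fin n → ℝ} {p : Fin k → Fin n → ℝ}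

theorem sum_Iic_sum_mul_le_and_eq_zero (hk : k ≤ n) (hμ : Antitone μ) (hp0 : ∀ i m, 0 ≤ p i m)
    (hrow : ∀ i, ∑ m, p i m = 1) (hcol : ∀ m, ∑ i, p i m ≤ 1) (j : Fin k) :
    ∑ i ≤ j, ∑ m, μ m * p i m ≤ ∑ i ≤ j, μ (Fin.castLE hk i) ∧
      (∑ i ≤ j, ∑ m, μ m * p i m = ∑ i ≤ j, μ (Fin.castLE hk i) →
        ∀ m, μ m < μ (Fin.castLE hk j) → p j m = 0) := by
  set t : Fin n → ℝ := fun m => ∑ i ≤ j, p i m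
  have ht0 (m : Fin n) : 0 ≤ t m := sum_nonneg fun i _ => hp0 i m
  have ht1 (m : Fin n) : t m ≤ 1 :=
    (sum_le_sum_of_subset_of_nonneg (subset_univ _) fun i _ _ => hp0 i m).trans (hcol m)
  have ht : ∑ m, t m = #(Iic (Fin.castLE hk j)) := by
    simp only [t, sum_comm (s := univ), hrow, sum_const, nsmul_one, Fin.card_Iic, Fin.val_castLE]
  have hlhs : ∑ i ≤ j, ∑ m, μ m * p i m = ∑ m, μ m * t m := by
    simp only [t, mul_sum]; exact sum_comm
  rw [hlhs, ← Fin.sum_Iic_castLE]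
  refine ⟨sum_mul_le_sum_Iic hμ ht0 ht1 ht, fun h m hm => ?_⟩
  have htm := eq_zero_of_sum_mul_eq_sum_Iic hμ ht0 ht1 ht h hm
  exact (sum_eq_zero_iff_of_nonneg fun i _ => hp0 i m).mp htm j (mem_Iic.mpr le_rfl)

end Substochastic

section WeightedKyFan

variable {k n : ℕ} {v : Fin k → ℝ} {μ : Fin n → ℝ} {p : Fin k → Fin n → ℝ}

theorem sum_mul_sum_mul_le (hk : k ≤ n) (hv : Antitone v) (hv0 : ∀ i, 0 ≤ v i)
    (hμ : Antitone μ) (hp0 : ∀ i m, 0 ≤ p i m) (hrow : ∀ i, ∑ m, p i m = 1)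
    (hcol : ∀ m, ∑ i, p i m ≤ 1) :
    ∑ i, v i * ∑ m, μ m * p i m ≤ ∑ i, v i * μ (Fin.castLE hk i) := by
  have := Fin.sum_mul_nonneg_of_sum_Iic_nonneg hv hv0
    (e := fun i => μ (Fin.castLE hk i) - ∑ m, μ m * p i m) fun j => by
      simpa only [sum_sub_distrib, sub_nonneg] using
        (sum_Iic_sum_mul_le_and_eq_zero hk hμ hp0 hrow hcol j).1
  simpa only [mul_sub, sum_sub_distrib, sub_nonneg] using this

theorem eq_of_sum_mul_sum_mul_eq (hk : k ≤ n) (hv : StrictAnti v) (hv0 : ∀ i, 0 < v i)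
    (hμ : Antitone μ) (hp0 : ∀ i m, 0 ≤ p i m) (hrow : ∀ i, ∑ m, p i m = 1)
    (hcol : ∀ m, ∑ i, p i m ≤ 1)
    (h : ∑ i, v i * ∑ m, μ m * p i m = ∑ i, v i * μ (Fin.castLE hk i)) {i : Fin k} {m : Fin n}
    (hpim : p i m ≠ 0) : μ m = μ (Fin.castLE hk i) := by
  have hprefix := sum_Iic_sum_mul_le_and_eq_zero hk hμ hp0 hrow hcol
  have hdiag : ∀ i, ∑ m, μ m * p i m = μ (Fin.castLE hk i) := by
    have := Fin.eq_zero_of_sum_mul_eq_zero hv hv0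
      (e := fun i => μ (Fin.castLE hk i) - ∑ m, μ m * p i m)
      (fun j => by simpa only [sum_sub_distrib, sub_nonneg] using (hprefix j).1)
      (by simp only [mul_sub, sum_sub_distrib, h, sub_self])
    exact fun i => (sub_eq_zero.mp (congrFun this i)).symm
  have hle (m : Fin n) (hpm : p i m ≠ 0) : μ (Fin.castLE hk i) ≤ μ m :=
    not_lt.mp fun hlt => hpm ((hprefix i).2 (sum_congr rfl fun i _ => hdiag i) m hlt)
  have hterm (m : Fin n) : 0 ≤ (μ m - μ (Fin.castLE hk i)) * p i m := by
    by_cases hpm : p i m = 0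
    · simp [hpm]
    · exact mul_nonneg (sub_nonneg.mpr (hle m hpm)) (hp0 i m)
  have hsum : ∑ m, (μ m - μ (Fin.castLE hk i)) * p i m = 0 := by
    simp only [sub_mul, sum_sub_distrib, hdiag, ← mul_sum, hrow, mul_one, sub_self]
  have := (sum_eq_zero_iff_of_nonneg fun m _ => hterm m).mp hsum m (mem_univ m)
  exact sub_eq_zero.mp ((mul_eq_zero.mp this).resolve_right hpim)

end WeightedKyFan

section OrthonormalBasis

open scoped InnerProductSpace

variable {𝕜 E ι : Type*} [RCLike 𝕜] [NormedAddCommGroup E] [InnerProductSpace 𝕜 E] [Fintype ι]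
  {T : E →ₗ[𝕜] E} {b : OrthonormalBasis ι 𝕜 E} {μ : ι → ℝ}

theorem apply_eq_sum_inner_mul_smul (hb : ∀ m, T (b m) = (μ m : 𝕜) • b m) (x : E) :
    T x = ∑ m, (⟪b m, x⟫_𝕜 * μ m) • b m := by
  conv_lhs => rw [← b.sum_repr' x]
  simp only [map_sum, map_smul, hb, smul_smul]

theorem re_inner_apply_self_eq_sum (hb : ∀ m, T (b m) = (μ m : 𝕜) • b m) (x : E) :
    RCLike.re ⟪x, T x⟫_𝕜 = ∑ m, μ m * ‖⟪b m, x⟫_𝕜‖ ^ 2 := by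
  rw [apply_eq_sum_inner_mul_smul hb, inner_sum, map_sum]
  refine sum_congr rfl fun m _ => ?_
  rw [inner_smul_right, ← inner_conj_symm x (b m), mul_right_comm, RCLike.mul_conj]
  norm_cast
  ring

theorem apply_eq_smul_of_inner_eq_zero (hb : ∀ m, T (b m) = (μ m : 𝕜) • b m) {x : E} {c : ℝ}
    (hx : ∀ m, μ m ≠ c → ⟪b m, x⟫_𝕜 = 0) : T x = (c : 𝕜) • x := by
  conv_rhs => rw [← b.sum_repr' x]
  rw [apply_eq_sum_inner_mul_smul hb, smul_sum]
  refine sum_congr rfl fun m _ => ?_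
  by_cases hm : μ m = c
  · rw [hm, smul_smul, mul_comm]
  · simp [hx m hm]

theorem sum_sq_norm_inner_orthonormal_le_one {κ : Type*} [Fintype κ] {X : κ → E}
    (hX : Orthonormal 𝕜 X) (m : ι) : ∑ i, ‖⟪b m, X i⟫_𝕜‖ ^ 2 ≤ 1 := by
  simpa [norm_inner_symm, b.orthonormal.1 m] using hX.sum_inner_products_le (x := b m) (s := univ)

end OrthonormalBasis

section OperatorKyFan

open scoped InnerProductSpace

variable {𝕜 E : Type*} [RCLike 𝕜] [NormedAddCommGroup E] [InnerProductSpace 𝕜 E]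
  {k n : ℕ} {T : E →ₗ[𝕜] E} {b : OrthonormalBasis (Fin n) 𝕜 E} {μ : Fin n → ℝ}
  {v : Fin k → ℝ} {X : Fin k → E}

theorem sum_mul_re_inner_apply_le (hk : k ≤ n) (hμ : Antitone μ)
    (hb : ∀ m, T (b m) = (μ m : 𝕜) • b m) (hv : Antitone v) (hv0 : ∀ i, 0 ≤ v i)
    (hX : Orthonormal 𝕜 X) :
    ∑ i, v i * RCLike.re ⟪X i, T (X i)⟫_𝕜 ≤ ∑ i, v i * μ (Fin.castLE hk i) := by
  simp only [re_inner_apply_self_eq_sum hb]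
  exact sum_mul_sum_mul_le hk hv hv0 hμ (fun _ _ => by positivity)
    (fun i => by rw [b.sum_sq_norm_inner_right, hX.1 i, one_pow])
    (sum_sq_norm_inner_orthonormal_le_one hX)

theorem sum_mul_re_inner_apply_eq_iff (hk : k ≤ n) (hμ : Antitone μ)
    (hb : ∀ m, T (b m) = (μ m : 𝕜) • b m) (hv : StrictAnti v) (hv0 : ∀ i, 0 < v i)
    (hX : Orthonormal 𝕜 X) :
    ∑ i, v i * RCLike.re ⟪X i, T (X i)⟫_𝕜 = ∑ i, v i * μ (Fin.castLE hk i) ↔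
      ∀ i, T (X i) = (μ (Fin.castLE hk i) : 𝕜) • X i := by
  refine ⟨fun h i => apply_eq_smul_of_inner_eq_zero hb fun m hm => ?_, fun h => ?_⟩
  · simp only [re_inner_apply_self_eq_sum hb] at h
    by_contra hne
    exact hm (eq_of_sum_mul_sum_mul_eq hk hv hv0 hμ (fun _ _ => by positivity)
      (fun i => by rw [b.sum_sq_norm_inner_right, hX.1 i, one_pow])
      (sum_sq_norm_inner_orthonormal_le_one hX) h (by simpa using hne))
  · simp [h, inner_smul_right, hX.1 _]

end OperatorKyFan

section MatrixTranslation

open scoped InnerProductSpace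
open WithLp (toLp)

variable {k n : ℕ}

theorem onFam_iff_orthonormal {x : Fin k → Fin n → ℂ} :
    ONFam x ↔ Orthonormal ℂ fun i => toLp 2 (x i) := by
  simp only [ONFam, orthonormal_iff_ite, EuclideanSpace.inner_toLp_toLp, dotProduct,
    Pi.star_apply, RCLike.star_def, mul_comm]

theorem hip_outer_eq_re_inner (x : Fin n → ℂ) (A : Mat n) :
    hip (outer x) A = RCLike.re ⟪toLp 2 x, toEuclideanLin A (toLp 2 x)⟫_ℂ := by
  rw [hip, outer, vecMulVec_mul, trace_vecMulVec, toLpLin_toLp, EuclideanSpace.inner_toLp_toLp,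
    dotProduct_comm, ← dotProduct_mulVec, dotProduct_comm]
  rfl

theorem toEuclideanLin_toLp_eq_smul_iff {A : Mat n} {x : Fin n → ℂ} {c : ℂ} :
    toEuclideanLin A (toLp 2 x) = c • toLp 2 x ↔ A *ᵥ x = c • x := by
  rw [toLpLin_toLp, ← WithLp.toLp_smul, (WithLp.toLp_injective 2).eq_iff, toLin'_apply]

theorem eigs_antitone {ρ : Mat n} (hH : ρ.IsHermitian) : Antitone (eigs ρ) := fun i j hij => by
  simpa only [eigs, dif_pos hH] using Tuple.monotone_sort hH.eigenvalues (Fin.rev_le_rev.mpr hij)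

theorem exists_orthonormalBasis_eigs {ρ : Mat n} (hH : ρ.IsHermitian) :
    ∃ b : OrthonormalBasis (Fin n) ℂ (EuclideanSpace ℂ (Fin n)),
      ∀ m, toEuclideanLin ρ (b m) = (eigs ρ m : ℂ) • b m := by
  refine ⟨hH.eigenvectorBasis.reindex (Fin.revPerm.trans (Tuple.sort hH.eigenvalues)).symm,
    fun m => ?_⟩
  have heig : eigs ρ m = hH.eigenvalues (Tuple.sort hH.eigenvalues m.rev) := by
    simp only [eigs, dif_pos hH]; rfl
  simp only [OrthonormalBasis.reindex_apply, Equiv.symm_symm, Equiv.trans_apply, Fin.revPerm_apply,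
    heig]
  apply WithLp.ofLp_injective 2
  rw [ofLp_toLpLin, toLin'_apply, hH.mulVec_eigenvectorBasis, WithLp.ofLp_smul,
    Complex.coe_smul]

end MatrixTranslation

section Eigenvectors

variable {k n : ℕ} {ρ : Mat n} {v : Fin k → ℝ} {x : Fin k → Fin n → ℂ}

theorem sum_mul_hip_outer_le (hH : ρ.IsHermitian) (hk : k ≤ n) (hv : Antitone v)
    (hv0 : ∀ i, 0 ≤ v i) (hx : ONFam x) :
    ∑ i, v i * hip (outer (x i)) ρ ≤ ∑ i, v i * eigs ρ (Fin.castLE hk i) := by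
  obtain ⟨b, hb⟩ := exists_orthonormalBasis_eigs hH
  simpa only [hip_outer_eq_re_inner] using
    sum_mul_re_inner_apply_le hk (eigs_antitone hH) hb hv hv0 (onFam_iff_orthonormal.mp hx)

theorem sum_mul_hip_outer_eq_iff (hH : ρ.IsHermitian) (hk : k ≤ n) (hv : StrictAnti v)
    (hv0 : ∀ i, 0 < v i) (hx : ONFam x) :
    ∑ i, v i * hip (outer (x i)) ρ = ∑ i, v i * eigs ρ (Fin.castLE hk i) ↔
      ∀ i, ρ *ᵥ x i = (eigs ρ (Fin.castLE hk i) : ℂ) • x i := by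
  obtain ⟨b, hb⟩ := exists_orthonormalBasis_eigs hH
  simp only [hip_outer_eq_re_inner, ← toEuclideanLin_toLp_eq_smul_iff]
  exact sum_mul_re_inner_apply_eq_iff hk (eigs_antitone hH) hb hv hv0 (onFam_iff_orthonormal.mp hx)

theorem exists_onFam_mulVec_eq_eigs (hH : ρ.IsHermitian) (hk : k ≤ n) :
    ∃ z : Fin k → Fin n → ℂ, ONFam z ∧ ∀ i, ρ *ᵥ z i = (eigs ρ (Fin.castLE hk i) : ℂ) • z i := by
  obtain ⟨b, hb⟩ := exists_orthonormalBasis_eigs hH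
  exact ⟨fun i => (b (Fin.castLE hk i)).ofLp,
    onFam_iff_orthonormal.mpr (b.orthonormal.comp _ (Fin.castLE_injective hk)),
    fun i => toEuclideanLin_toLp_eq_smul_iff.mp (hb _)⟩

end Eigenvectors

/-- eliciting the top-k eigenvectors of a density matrix. -/
theorem elicit_top_k_eigenvectors {n k : ℕ} (hk : k ≤ n)
    (v : Fin k → ℝ) (hv : StrictAnti v) (hvpos : ∀ i, 0 < v i)
    (x : Fin k → Fin n → ℂ) (hx : ONFam x)
    (ρ : Mat n) (hρ : ρ ∈ Dens n) :
    (∑ i, v i * hip (outer (x i)) ρ ≤ ∑ i, v i * eigs ρ (Fin.castLE hk i)) ∧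
    (∑ i, v i * hip (outer (x i)) ρ = ∑ i, v i * eigs ρ (Fin.castLE hk i) ↔
      ∀ i, ρ.mulVec (x i) = (eigs ρ (Fin.castLE hk i) : ℂ) • x i) ∧
    ((∀ z : Fin k → Fin n → ℂ, ONFam z →
        ∑ i, v i * hip (outer (z i)) ρ ≤ ∑ i, v i * hip (outer (x i)) ρ) ↔
      ∀ i, ρ.mulVec (x i) = (eigs ρ (Fin.castLE hk i) : ℂ) • x i) := by
  have hH : ρ.IsHermitian := hρ.1.isHermitian
  have hle (z : Fin k → Fin n → ℂ) (hz : ONFam z) :=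
    sum_mul_hip_outer_le hH hk hv.antitone (fun i => (hvpos i).le) hz
  have heq := sum_mul_hip_outer_eq_iff hH hk hv hvpos hx
  obtain ⟨z, hz, hzeig⟩ := exists_onFam_mulVec_eq_eigs hH hk
  have hzmax := (sum_mul_hip_outer_eq_iff hH hk hv hvpos hz).mpr hzeig
  refine ⟨hle x hx, heq, fun hmax => heq.mp ((hle x hx).antisymm ?_), fun hxeig z' hz' => ?_⟩
  · exact hzmax ▸ hmax z hz
  · exact heq.mpr hxeig ▸ hle z' hz'
end

section
/- Let μ◇ = (μ◇_y)_{y∈Y} be a tomographically complete POVM on ℂⁿ, let φ : Herm(n) → ℝ^Y be the (injective) real-linear map φX = (⟨μ◇_y, X⟩)_{y∈Y}, let ψ : ℝ^Y → Herm(n) be a real-linear left inverse of φ, let P◇ = φ(Dens(n)) ⊆ Δ_Y, and for a property Γ : Dens(n) → R define Γ◇ : P◇ → R by Γ◇(p) = Γ(ψ p). Then Γ is elicitable by a quantum score (there exist s : R × Y' → ℝ and POVMs μ(r) with {Γ(ρ)} = argmax_{r∈R} Σ_y ⟨μ(r)_y, ρ⟩ s(r, y) for all ρ ∈ Dens(n))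 if and only if Γ◇ is elicitable by a classical scoring rule relative to P◇ (there exists ŝ : R × Y → ℝ with {Γ◇(p)} = argmax_{r∈R} Σ_{y∈Y} p_y ŝ(r, y) for all p ∈ P◇). -/
open Matrix BigOperators ComplexOrder

lemma hip_smul {n : ℕ} (c : ℝ) (A ρ : Mat n) : hip (c • A) ρ = c * hip A ρ := by
  simp [hip, Matrix.smul_mul, Complex.real_smul]

lemma hip_sum_smul {n : ℕ} {ι : Type*} [Fintype ι] (c : ι → ℝ) (A : ι → Mat n)
    (ρ : Mat n) : hip (∑ i, c i • A i) ρ = ∑ i, c i * hip (A i) ρ := by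
  simp only [hip, Finset.sum_mul, Matrix.trace_sum, Complex.re_sum]
  refine Finset.sum_congr rfl fun i _ => ?_
  simp [Matrix.smul_mul, Complex.real_smul]

lemma isHermitian_sum_smul {n : ℕ} {ι : Type*} [Fintype ι] (c : ι → ℝ)
    (A : ι → Mat n) (hA : ∀ i, (A i).IsHermitian) :
    (∑ i, c i • A i).IsHermitian := by
  unfold Matrix.IsHermitian
  rw [Matrix.conjTranspose_sum]
  refine Finset.sum_congr rfl fun i _ => ?_
  rw [Matrix.conjTranspose_smul, (hA i).eq]
  norm_num


/-- quantum elicitability of Γ is equivalent to classical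
elicitability of Γ◇ relative to P◇. -/
theorem quantum_classical_elicitable {n : ℕ} {Y : Type*} [Fintype Y] {R : Type*}
    (μd : Y → Mat n) (hμ : IsPOVM μd) (htomo : TomoComplete μd)
    (ψ : (Y → ℝ) →ₗ[ℝ] Mat n)
    (hψherm : ∀ p, (ψ p).IsHermitian)
    (hψ : ∀ X : Mat n, X.IsHermitian → ψ (fun y => hip (μd y) X) = X)
    (Γ : Mat n → R) :
    (∃ (m : ℕ) (s : R → Fin m → ℝ) (μ : R → Fin m → Mat n),
        (∀ r, IsPOVM (μ r)) ∧
        ∀ ρ ∈ Dens n, ∀ r,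
          (∀ r', expScoreR s μ r' ρ ≤ expScoreR s μ r ρ) ↔ r = Γ ρ) ↔
    (∃ sh : R → Y → ℝ,
        ∀ ρ ∈ Dens n, ∀ r,
          (∀ r', ∑ y, hip (μd y) ρ * sh r' y ≤ ∑ y, hip (μd y) ρ * sh r y) ↔
            r = Γ (ψ (fun y => hip (μd y) ρ))) := by
  constructor
  · rintro ⟨m, s, μ, hpovm, hopt⟩
    have hD : ∀ r, (∑ i, s r i • μ r i) ∈ Submodule.span ℝ (Set.range μd) := by
      intro r
      rw [← htomo]
      exact isHermitian_sum_smul _ _ fun i => ((hpovm r).1 i).isHermitian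
    have hD' : ∀ r, ∃ c : Y → ℝ, ∑ y, c y • μd y = ∑ i, s r i • μ r i := by
      intro r
      exact (Submodule.mem_span_range_iff_exists_fun (R := ℝ)).mp (hD r)
    choose sh hsh using hD'
    refine ⟨sh, fun ρ hρ r => ?_⟩
    have hkey : ∀ r', ∑ y, hip (μd y) ρ * sh r' y = expScoreR s μ r' ρ := by
      intro r'
      have := congrArg (fun M => hip M ρ) (hsh r')
      simp only [hip_sum_smul] at this
      calc ∑ y, hip (μd y) ρ * sh r' y = ∑ y, sh r' y * hip (μd y) ρ := by
            simp [mul_comm]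
        _ = ∑ i, s r' i * hip (μ r' i) ρ := this
        _ = expScoreR s μ r' ρ := by simp [expScoreR, mul_comm]
    have hΓ : Γ (ψ fun y => hip (μd y) ρ) = Γ ρ := by
      rw [hψ ρ hρ.1.isHermitian]
    rw [hΓ]
    simp only [hkey]
    exact hopt ρ hρ r
  · rintro ⟨sh, hsh⟩
    refine ⟨Fintype.card Y, fun r i => sh r ((Fintype.equivFin Y).symm i),
      fun r i => μd ((Fintype.equivFin Y).symm i), fun r => ⟨fun i => hμ.1 _, ?_⟩,
      fun ρ hρ r => ?_⟩
    · rw [← hμ.2]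
      exact Fintype.sum_equiv (Fintype.equivFin Y).symm _ _ fun i => rfl
    have hkey : ∀ r', expScoreR (fun r i => sh r ((Fintype.equivFin Y).symm i))
        (fun r i => μd ((Fintype.equivFin Y).symm i)) r' ρ
        = ∑ y, hip (μd y) ρ * sh r' y := by
      intro r'
      exact Fintype.sum_equiv (Fintype.equivFin Y).symm _ _ fun i => rfl
    have hΓ : Γ (ψ fun y => hip (μd y) ρ) = Γ ρ := by
      rw [hψ ρ hρ.1.isHermitian]
    simp only [hkey]
    rw [← hΓ]
    exact hsh ρ hρ r
end
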